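/- For every set π of primes and every finite semigroup S, every member of 𝒞𝒫_π(S) is a Ḡ_π-pointlike subset of S. -/
import Mathlib


open Pointwise

/-- `spow s n` is the power `s^(n+1)` of `s`, defined in any magma. -/
def spow {S : Type*} [Mul S] (s : S) (n : ℕ) : S := (fun x => x * s)^[n] s

/-- The cyclic subsemigroup of `P(S)` generated by the subset `P`, namely the
collection of all setwise powers `P, P², P³, …` of `P`. -/
def cyclicSetPowers {S : Type} [Semigroup S] (P : Set S) : Set (Set S) :=
  Set.range (spow P)

/-- A subset `G` of a semigroup is a group under the induced multiplication:
it is closed under multiplication, has a two-sided identity element, and every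
element has a two-sided inverse. -/
def IsGroupSet {M : Type*} [Mul M] (G : Set M) : Prop :=
  (∀ x ∈ G, ∀ y ∈ G, x * y ∈ G) ∧
    ∃ e ∈ G, (∀ x ∈ G, e * x = x ∧ x * e = x) ∧
      ∀ x ∈ G, ∃ y ∈ G, x * y = e ∧ y * x = e

/-- `𝒞𝒫_π(S)`: the smallest collection of nonempty subsets of `S` containing
the singletons, closed under setwise products and nonempty subsets, and
containing `⋃_{n ≥ 1} Pⁿ` whenever it contains a set `P` such that the
subsemigroup of `P(S)` generated by `P` is a cyclic `π'`-group, i.e. a cyclic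
group whose order is divisible by no prime belonging to `π`. -/
inductive CP {S : Type} [Semigroup S] (π : Set ℕ) : Set S → Prop
  | singleton (s : S) : CP π {s}
  | mul {P Q : Set S} : CP π P → CP π Q → CP π (P * Q)
  | subset {P Q : Set S} : CP π P → Q ⊆ P → Q.Nonempty → CP π Q
  | group {P : Set S} : CP π P → IsGroupSet (cyclicSetPowers P) →
      (∀ q ∈ π, ¬ q ∣ Nat.card ↥(cyclicSetPowers P)) →
      CP π (⋃ n : ℕ, spow P n)
section SpowLemmas

variable {M : Type*} [Semigroup M]

lemma spow_zero' (x : M) : spow x 0 = x := rfl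

lemma spow_succ' (x : M) (n : ℕ) : spow x (n + 1) = spow x n * x := by
  simp [spow, Function.iterate_succ_apply']

lemma spow_add' (x : M) (a b : ℕ) : spow x (a + b + 1) = spow x a * spow x b := by
  induction b with
  | zero => rw [Nat.add_zero, spow_succ', spow_zero']
  | succ b ih =>
    have h : a + (b + 1) + 1 = (a + b + 1) + 1 := by ring
    rw [h, spow_succ', ih, spow_succ', mul_assoc]

/-- Lagrange-type lemma: if `G` is a group-set in a finite semigroup and `x ∈ G`,
then `spow x m` (with `m + 1 = Nat.card G`) acts as a two-sided identity on `G`. -/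
lemma exists_identity_spow [Finite M] {G : Set M}
    (hG : IsGroupSet G) {x : M} (hx : x ∈ G) :
    ∃ m, m + 1 = Nat.card ↥G ∧ ∀ y ∈ G, y * spow x m = y ∧ spow x m * y = y := by
  obtain ⟨hmul, e, heG, hid, hinv⟩ := hG
  choose inv hinvG hinv1 hinv2 using hinv
  letI : Group ↥G :=
    { mul := fun a b => ⟨a.1 * b.1, hmul _ a.2 _ b.2⟩
      mul_assoc := fun a b c => Subtype.ext (mul_assoc (a : M) b c)
      one := ⟨e, heG⟩
      one_mul := fun a => Subtype.ext ((hid _ a.2).1)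
      mul_one := fun a => Subtype.ext ((hid _ a.2).2)
      inv := fun a => ⟨inv _ a.2, hinvG _ a.2⟩
      inv_mul_cancel := fun a => Subtype.ext (hinv2 _ a.2) }
  haveI : Finite ↥G := Subtype.finite
  haveI : Nonempty ↥G := ⟨⟨e, heG⟩⟩
  have hcard : 0 < Nat.card ↥G := Nat.card_pos
  obtain ⟨m, hm⟩ : ∃ m, m + 1 = Nat.card ↥G := ⟨Nat.card ↥G - 1, by omega⟩
  have hcoe : ∀ n : ℕ, (((⟨x, hx⟩ : ↥G) ^ (n + 1) : ↥G) : M) = spow x n := by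
    intro n
    induction n with
    | zero => rw [pow_one]; rfl
    | succ n ih => rw [pow_succ, spow_succ', ← ih]; rfl
  have key : ((⟨x, hx⟩ : ↥G) ^ (m + 1) : ↥G) = 1 := by rw [hm]; exact pow_card_eq_one'
  have hxm : spow x m = e := by rw [← hcoe m, key]; rfl
  exact ⟨m, hm, fun y hy => by rw [hxm]; exact ⟨(hid y hy).2, (hid y hy).1⟩⟩

/-- Propagation of one periodicity relation. -/
lemma spow_period (t : M) (i per : ℕ)
    (h : spow t (i + per) = spow t i) :
    ∀ s k, spow t (i + s + k * per) = spow t (i + s) := by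
  have base : ∀ s, spow t (i + s + per) = spow t (i + s) := by
    intro s
    cases s with
    | zero => simpa using h
    | succ s =>
      have e1 : i + (s + 1) + per = (i + per) + s + 1 := by ring
      rw [e1, spow_add', h, ← spow_add']
      congr 1
  intro s k
  induction k with
  | zero => simp
  | succ k ih =>
    have e : i + s + (k + 1) * per = i + (s + k * per) + per := by ring
    have e2 : i + (s + k * per) = i + s + k * per := by ring
    rw [e, base, e2, ih]

lemma spow_eq_of_modEq (t : M) (r c : ℕ)
    (hper : ∀ s k, spow t (r + s + k * c) = spow t (r + s))
    {a b : ℕ} (ha : r ≤ a) (hb : r ≤ b) (hab : a ≡ b [MOD c]) :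
    spow t a = spow t b := by
  have key : ∀ a b : ℕ, r ≤ a → a ≤ b → a ≡ b [MOD c] → spow t a = spow t b := by
    intro a b ha hle hab
    obtain ⟨k, hk⟩ := (Nat.modEq_iff_dvd' hle).mp hab
    have hb' : b = a + k * c := by
      have := (Nat.sub_eq_iff_eq_add hle).mp hk
      rw [this]; ring
    obtain ⟨s, rfl⟩ : ∃ s, a = r + s := ⟨a - r, by omega⟩
    rw [hb', hper s k]
  rcases le_total a b with h | h
  · exact key a b ha h hab
  · exact (key b a hb h hab.symm).symm

end SpowLemmas

/-- The kernel of the monogenic subsemigroup generated by `t` in a finite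
semigroup: there exist `ρ` and `c ≥ 1` such that `c` is the cardinality of a
group-set `K` and `spow t` is constant on congruence classes mod `c` above `ρ`. -/
lemma monogenic_kernel {T : Type*} [Semigroup T] [Finite T] (t : T) :
    ∃ ρ c : ℕ, 1 ≤ c ∧ (∃ K : Set T, IsGroupSet K ∧ Nat.card ↥K = c) ∧
      ∀ a b : ℕ, ρ ≤ a → ρ ≤ b → a ≡ b [MOD c] → spow t a = spow t b := by
  obtain ⟨a, b, hne, heq⟩ := Finite.exists_ne_map_eq_of_infinite (spow t)
  have H : ∃ i per, 1 ≤ per ∧ spow t (i + per) = spow t i := by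
    rcases Nat.lt_or_ge a b with h | h
    · exact ⟨a, b - a, by omega, by rw [show a + (b - a) = b by omega]; exact heq.symm⟩
    · have h' : b < a := by omega
      exact ⟨b, a - b, by omega, by rw [show b + (a - b) = a by omega]; exact heq⟩
  obtain ⟨i, per, hper1, hper0⟩ := H
  obtain ⟨pm, rfl⟩ : ∃ pm, per = pm + 1 := ⟨per - 1, by omega⟩
  have hper := spow_period t i (pm + 1) hper0
  -- the idempotent index
  set ρ : ℕ := pm * (i + 1) + i with hρdef
  -- main periodicity: period ρ + 1 from index i on
  have hP1 : ∀ x, i ≤ x → spow t (x + (ρ + 1)) = spow t x := by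
    intro x hx
    obtain ⟨s, rfl⟩ : ∃ s, x = i + s := ⟨x - i, by omega⟩
    have e : i + s + (ρ + 1) = i + s + (i + 1) * (pm + 1) := by
      rw [hρdef]; ring
    rw [e, hper s (i + 1)]
  have hρi : i ≤ ρ := by omega
  -- the kernel
  set K : Set T := Set.range (fun s : ℕ => spow t (ρ + s)) with hKdef
  have hmemK : ∀ s : ℕ, spow t (ρ + s) ∈ K := fun s => ⟨s, rfl⟩
  -- closure
  have hclos : ∀ x ∈ K, ∀ y ∈ K, x * y ∈ K := by
    rintro x ⟨s1, rfl⟩ y ⟨s2, rfl⟩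
    simp only []
    rw [← spow_add']
    have e : ρ + s1 + (ρ + s2) + 1 = ρ + (s1 + ρ + s2 + 1) := by ring
    rw [e]; exact hmemK _
  -- identity
  have hidL : ∀ s : ℕ, spow t ρ * spow t (ρ + s) = spow t (ρ + s) := by
    intro s
    rw [← spow_add']
    have e : ρ + (ρ + s) + 1 = (ρ + s) + (ρ + 1) := by ring
    rw [e, hP1 (ρ + s) (by omega)]
  have hidR : ∀ s : ℕ, spow t (ρ + s) * spow t ρ = spow t (ρ + s) := by
    intro s
    rw [← spow_add']
    have e : ρ + s + ρ + 1 = (ρ + s) + (ρ + 1) := by ring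
    rw [e, hP1 (ρ + s) (by omega)]
  -- inverses
  have hinv : ∀ x ∈ K, ∃ y ∈ K, x * y = spow t ρ ∧ y * x = spow t ρ := by
    rintro x ⟨s, rfl⟩
    refine ⟨spow t (ρ + (pm * (ρ + s + 2) + 1)), hmemK _, ?_, ?_⟩
    · rw [← spow_add']
      have e : ρ + s + (ρ + (pm * (ρ + s + 2) + 1)) + 1
          = (i + (ρ - i)) + (ρ + s + 2) * (pm + 1) := by
        have : i + (ρ - i) = ρ := by omega
        rw [this]; ring
      rw [e, hper (ρ - i) (ρ + s + 2)]
      congr 1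
      omega
    · rw [← spow_add']
      have e : ρ + (pm * (ρ + s + 2) + 1) + (ρ + s) + 1
          = (i + (ρ - i)) + (ρ + s + 2) * (pm + 1) := by
        have : i + (ρ - i) = ρ := by omega
        rw [this]; ring
      rw [e, hper (ρ - i) (ρ + s + 2)]
      congr 1
      omega
  have hK : IsGroupSet K := by
    refine ⟨hclos, spow t ρ, by simpa using hmemK 0, ?_, hinv⟩
    rintro x ⟨s, rfl⟩
    exact ⟨hidL s, hidR s⟩
  haveI : Finite ↥K := Subtype.finite
  set c : ℕ := Nat.card ↥K with hcdef
  haveI : Nonempty ↥K := ⟨⟨spow t ρ, by simpa using hmemK 0⟩⟩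
  have hc1 : 1 ≤ c := Nat.card_pos
  -- generator u = spow t (ρ + 1)
  obtain ⟨m, hm, hact⟩ := exists_identity_spow hK (by simpa using hmemK 1 :
    spow t (ρ + 1) ∈ K)
  -- spow (spow t (ρ+1)) j = spow t (ρ + 1 + j)
  have hpow : ∀ j : ℕ, spow (spow t (ρ + 1)) j = spow t (ρ + 1 + j) := by
    intro j
    induction j with
    | zero => rfl
    | succ j ih =>
      rw [spow_succ', ih, ← spow_add']
      have e : ρ + 1 + j + (ρ + 1) + 1 = (ρ + 1 + (j + 1)) + (ρ + 1) := by ring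
      rw [e, hP1 _ (by omega)]
  -- deduce spow t (ρ + c) = spow t ρ
  have hbasec : spow t (ρ + c) = spow t ρ := by
    have h1 := (hact (spow t ρ) (by simpa using hmemK 0)).1
    rw [hpow m, ← spow_add'] at h1
    have e : ρ + (ρ + 1 + m) + 1 = (ρ + m + 1) + (ρ + 1) := by ring
    rw [e, hP1 _ (by omega)] at h1
    have e2 : ρ + m + 1 = ρ + c := by omega
    rwa [e2] at h1
  have hperc := spow_period t ρ c hbasec
  exact ⟨ρ, c, hc1, ⟨K, hK, rfl⟩,
    fun a b ha hb hab => spow_eq_of_modEq t ρ c hperc ha hb hab⟩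

/-- Powers of a covered set are covered by powers of the covering point. -/
lemma cover_spow {S T : Type} [Semigroup S] [Semigroup T] (R : Subsemigroup (S × T))
    {P : Set S} {t : T} (h : ∀ p ∈ P, (p, t) ∈ R) :
    ∀ n, ∀ p ∈ spow P n, (p, spow t n) ∈ R := by
  intro n
  induction n with
  | zero => exact h
  | succ n ih =>
    intro p hp
    rw [spow_succ'] at hp
    rw [Set.mem_mul] at hp
    obtain ⟨q, hq, a, ha, rfl⟩ := hp
    have := R.mul_mem (ih q hq) (h a ha)
    rw [spow_succ']
    exact this

/-- Every member of `𝒞𝒫_π(S)` is a `Ḡ_π`-pointlike subset of `S`: for every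
finite semigroup `T` all of whose subgroups are `π`-groups, and for every
subsemigroup `R` of `S × T` whose projection to the first coordinate is all of
`S`, there exists `t ∈ T` related to every element of `P`. -/
theorem CP_mem_is_Gpi_pointlike
    (π : Set ℕ) (hπ : ∀ q ∈ π, Nat.Prime q)
    {S : Type} [Semigroup S] [Finite S]
    (P : Set S) (hP : CP π P) :
    ∀ (T : Type) [Semigroup T] [Finite T],
      (∀ H : Set T, IsGroupSet H →
        ∀ q : ℕ, Nat.Prime q → q ∣ Nat.card ↥H → q ∈ π) →
      ∀ R : Subsemigroup (S × T),
        (∀ s : S, ∃ t : T, (s, t) ∈ R) →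
        ∃ t : T, ∀ p ∈ P, (p, t) ∈ R := by
  induction hP with
  | singleton s =>
    intro T _ _ hT R hR
    obtain ⟨t, ht⟩ := hR s
    exact ⟨t, fun p hp => by rw [Set.mem_singleton_iff] at hp; rw [hp]; exact ht⟩
  | mul hA hB ihA ihB =>
    intro T _ _ hT R hR
    obtain ⟨tA, htA⟩ := ihA T hT R hR
    obtain ⟨tB, htB⟩ := ihB T hT R hR
    refine ⟨tA * tB, ?_⟩
    intro p hp
    rw [Set.mem_mul] at hp
    obtain ⟨a, ha, b, hb, rfl⟩ := hp
    exact R.mul_mem (htA a ha) (htB b hb)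
  | subset hA hsub hne ih =>
    intro T _ _ hT R hR
    obtain ⟨t, ht⟩ := ih T hT R hR
    exact ⟨t, fun p hp => ht p (hsub hp)⟩
  | @group Q hQ hGrp hcardπ ih =>
    intro T _ _ hT R hR
    obtain ⟨t, ht⟩ := ih T hT R hR
    obtain ⟨ρ, c, hc1, ⟨K, hK, hKc⟩, hEq⟩ := monogenic_kernel t
    have hcπ : ∀ q : ℕ, Nat.Prime q → q ∣ c → q ∈ π := by
      intro q hq hdvd
      exact hT K hK q hq (by rwa [hKc])
    -- the S-side period d
    haveI : Finite (Set S) := by infer_instance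
    obtain ⟨m, hm, hact⟩ := exists_identity_spow hGrp (⟨0, rfl⟩ : Q ∈ cyclicSetPowers Q)
    set d : ℕ := Nat.card ↥(cyclicSetPowers Q) with hddef
    have hd1 : 1 ≤ d := by omega
    have hper1 : ∀ n, spow Q (n + d) = spow Q n := by
      intro n
      rw [show n + d = n + m + 1 by omega, spow_add']
      exact (hact (spow Q n) ⟨n, rfl⟩).1
    have hperiod : ∀ n k, spow Q (n + k * d) = spow Q n := by
      intro n k
      induction k with
      | zero => simp
      | succ k ih' =>
        rw [show n + (k + 1) * d = (n + k * d) + d by ring, hper1, ih']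
    -- coprimality
    have hco : Nat.Coprime d c := by
      by_contra h
      obtain ⟨q, hq, hqd⟩ := Nat.exists_prime_and_dvd h
      exact hcardπ q (hcπ q hq (hqd.trans (Nat.gcd_dvd_right d c)))
        (hqd.trans (Nat.gcd_dvd_left d c))
    refine ⟨spow t ρ, ?_⟩
    intro p hp
    rw [Set.mem_iUnion] at hp
    obtain ⟨n, hpn⟩ := hp
    haveI : NeZero c := ⟨by omega⟩
    set u : (ZMod c)ˣ := ZMod.unitOfCoprime d hco with hudef
    set k0 : ℕ := (((ρ : ZMod c) - (n : ZMod c)) * ((u⁻¹ : (ZMod c)ˣ) : ZMod c)).val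
      with hk0def
    set k : ℕ := k0 + ρ * c + c with hkdef
    have hksize : ρ ≤ n + k * d :=
      calc ρ ≤ ρ * c := Nat.le_mul_of_pos_right ρ hc1
        _ ≤ k := by rw [hkdef]; exact le_trans (Nat.le_add_left _ _) (Nat.le_add_right _ _)
        _ ≤ k * d := Nat.le_mul_of_pos_right k hd1
        _ ≤ n + k * d := Nat.le_add_left _ _
    have hmod : n + k * d ≡ ρ [MOD c] := by
      have hdu : ((d : ℕ) : ZMod c) = (u : ZMod c) := (ZMod.coe_unitOfCoprime d hco).symm
      have hk0 : ((k0 : ℕ) : ZMod c)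
          = ((ρ : ZMod c) - (n : ZMod c)) * ((u⁻¹ : (ZMod c)ˣ) : ZMod c) := by
        rw [hk0def]; exact ZMod.natCast_rightInverse _
      have hkc : ((k : ℕ) : ZMod c) = ((k0 : ℕ) : ZMod c) := by
        rw [hkdef]; push_cast [ZMod.natCast_self]; ring
      have hgoal : ((n + k * d : ℕ) : ZMod c) = ((ρ : ℕ) : ZMod c) := by
        push_cast
        rw [hkc, hk0, hdu]
        have hu1 : ((u⁻¹ : (ZMod c)ˣ) : ZMod c) * (u : ZMod c) = 1 := u.inv_mul
        calc (n : ZMod c) + ((ρ : ZMod c) - (n : ZMod c)) * ((u⁻¹ : (ZMod c)ˣ) : ZMod c) * (u : ZMod c)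
            = (n : ZMod c) + ((ρ : ZMod c) - (n : ZMod c))
                * (((u⁻¹ : (ZMod c)ˣ) : ZMod c) * (u : ZMod c)) := by ring
          _ = (ρ : ZMod c) := by rw [hu1]; ring
      exact (ZMod.natCast_eq_natCast_iff _ _ _).mp hgoal
    have heq : spow t (n + k * d) = spow t ρ := hEq _ _ hksize (le_refl ρ) hmod
    rw [← heq]
    have hpmem : p ∈ spow Q (n + k * d) := by rw [hperiod n k]; exact hpn
    exact cover_spow R ht _ p hpmem
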